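/- Let (N,g) be a complete connected Riemannian manifold, U ⊂ N open bounded, and R(p) = d_g(p,·)|_{cl(U)} the travel time map into C(cl(U)) with sup norm. Then R is a proper map: if a sequence {x_n} ⊂ N eventually leaves every compact set, then {R(x_n)} eventually leaves every compact subset of C(cl(U)). Consequently R is a topological embedding of N onto its image R(N). -/
import Mathlib


/-- A unit-speed minimizing geodesic segment on `[a,b]`, in metric terms. -/
def IsMinGeodOn {N : Type*} [MetricSpace N] (γ : ℝ → N) (a b : ℝ) : Prop :=
  ∀ s ∈ Set.Icc a b, ∀ t ∈ Set.Icc a b, dist (γ s) (γ t) = |s - t|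

/-- A (complete, unit-speed) geodesic: a curve that is locally distance minimizing. -/
def IsGeodesic {N : Type*} [MetricSpace N] (γ : ℝ → N) : Prop :=
  ∀ t : ℝ, ∃ ε > 0, IsMinGeodOn γ (t - ε) (t + ε)

/-- The travel time map `R(p) = dist(p, ·)|_K`, valued in continuous functions on `K`. -/
noncomputable def travelTimeMap {N : Type*} [MetricSpace N] (K : Set N) (p : N) :
    C(K, ℝ) :=
  ⟨fun z => dist p (z : N), Continuous.dist continuous_const continuous_subtype_val⟩

lemma IsMinGeodOn.mono {N : Type*} [MetricSpace N] {γ : ℝ → N} {a b a' b' : ℝ}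
    (h : IsMinGeodOn γ a b) (hsub : Set.Icc a' b' ⊆ Set.Icc a b) :
    IsMinGeodOn γ a' b' :=
  fun s hs t ht => h s (hsub hs) t (hsub ht)

/-- Injectivity of the travel time map. -/
lemma travelTimeMap_injective
    {N : Type*} [MetricSpace N]
    (hconn : ∀ x y : N, ∃ γ : ℝ → N, IsGeodesic γ ∧ γ 0 = x ∧ γ (dist x y) = y ∧
      IsMinGeodOn γ 0 (dist x y))
    (hrig : ∀ γ₁ γ₂ : ℝ → N, IsGeodesic γ₁ → IsGeodesic γ₂ →
      ∀ a b : ℝ, a < b → (∀ t ∈ Set.Icc a b, γ₁ t = γ₂ t) → γ₁ = γ₂)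
    (U : Set N) (hU : IsOpen U) (hne : U.Nonempty) :
    Function.Injective (travelTimeMap (closure U) : N → C(closure U, ℝ)) := by
  intro p q hpq
  -- equal distances to every point of `closure U`
  have hdist : ∀ z ∈ closure U, dist p z = dist q z := by
    intro z hz
    have := congrFun (congrArg DFunLike.coe hpq) ⟨z, hz⟩
    simpa [travelTimeMap] using this
  obtain ⟨z₀, hz₀⟩ := hne
  obtain ⟨r, hr, hball⟩ := Metric.isOpen_iff.1 hU z₀ hz₀
  -- geodesic from z₀ to p
  obtain ⟨γ, hγ, hγ0, hγd, hγmin⟩ := hconn z₀ p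
  set d : ℝ := dist z₀ p with hd
  have hd0 : 0 ≤ d := dist_nonneg
  rcases eq_or_lt_of_le hd0 with hdeq | hdpos
  · -- d = 0: p = z₀ ∈ closure U
    have hpz : p = z₀ := by
      rw [← dist_eq_zero]; rw [dist_comm]; exact hdeq.symm
    have h1 : dist p p = dist q p := hdist p (hpz ▸ subset_closure hz₀)
    have : dist q p = 0 := by rw [← h1, dist_self]
    exact (eq_of_dist_eq_zero this).symm
  · -- d > 0
    set ε : ℝ := min (d / 2) (r / 2) with hε
    have hεpos : 0 < ε := lt_min (by linarith) (by linarith)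
    have hεd : ε < d := lt_of_le_of_lt (min_le_left _ _) (by linarith)
    have hεIcc : ε ∈ Set.Icc (0 : ℝ) d := ⟨hεpos.le, hεd.le⟩
    have hγε_z₀ : dist (γ ε) z₀ = ε := by
      have := hγmin ε hεIcc 0 ⟨le_rfl, hd0⟩
      rw [hγ0] at this
      rw [this, sub_zero, abs_of_nonneg hεpos.le]
    have hγεU : γ ε ∈ U := by
      apply hball
      have : dist (γ ε) z₀ < r := by
        rw [hγε_z₀]; exact lt_of_le_of_lt (min_le_right _ _) (by linarith)
      exact this
    have hγεp : dist (γ ε) p = d - ε := by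
      have := hγmin ε hεIcc d ⟨hd0, le_rfl⟩
      rw [hγd] at this
      rw [this, abs_of_nonpos (by linarith)]; ring
    -- distance from q to γ ε equals d - ε, and dist q z₀ = d
    have hqz₀ : dist q z₀ = d := by
      rw [← hdist z₀ (subset_closure hz₀), hd, dist_comm]
    have hqγε : dist q (γ ε) = d - ε := by
      rw [← hdist (γ ε) (subset_closure hγεU), dist_comm, hγεp]
    -- geodesic from γ ε to q
    obtain ⟨σ, hσ, hσ0, hσD, hσmin⟩ := hconn (γ ε) q
    have hD : dist (γ ε) q = d - ε := by rw [dist_comm]; exact hqγε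
    rw [hD] at hσD hσmin
    -- concatenated curve
    set τ : ℝ → N := fun t => if t ≤ ε then γ t else σ (t - ε) with hτ
    have hτγ : ∀ t ≤ ε, τ t = γ t := fun t ht => if_pos ht
    have hτσ : ∀ t, ε ≤ t → τ t = σ (t - ε) := by
      intro t ht
      rcases eq_or_lt_of_le ht with h | h
      · rw [hτ]; simp only [← h, if_pos le_rfl, sub_self, hσ0]
      · exact if_neg (not_le.2 h)
    -- τ is minimizing on [0, d]
    have hτmin : IsMinGeodOn τ 0 d := by
      have key : ∀ s ∈ Set.Icc (0:ℝ) d, ∀ t ∈ Set.Icc (0:ℝ) d, s ≤ t →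
          dist (τ s) (τ t) = t - s := by
        intro s hs t ht hst
        obtain ⟨hs0, hsd⟩ := hs
        obtain ⟨ht0, htd⟩ := ht
        rcases le_or_gt t ε with htε | htε
        · rw [hτγ s (hst.trans htε), hτγ t htε]
          rw [hγmin s ⟨hs0, hsd⟩ t ⟨ht0, htd⟩, abs_of_nonpos (by linarith)]
          ring
        · rcases le_or_gt ε s with hsε | hsε
          · rw [hτσ s hsε, hτσ t htε.le]
            rw [hσmin (s - ε) ⟨by linarith, by linarith⟩ (t - ε) ⟨by linarith, by linarith⟩,
              abs_of_nonpos (by linarith)]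
            ring
          · -- s < ε < t
            rw [hτγ s hsε.le, hτσ t htε.le]
            have hle : dist (γ s) (σ (t - ε)) ≤ t - s := by
              calc dist (γ s) (σ (t - ε)) ≤ dist (γ s) (γ ε) + dist (γ ε) (σ (t - ε)) :=
                    dist_triangle _ _ _
                _ = (ε - s) + (t - ε) := by
                    rw [hγmin s ⟨hs0, hsd⟩ ε hεIcc, abs_of_nonpos (by linarith)]
                    rw [← hσ0]
                    rw [hσmin 0 ⟨le_rfl, by linarith⟩ (t - ε) ⟨by linarith, by linarith⟩,
                      abs_of_nonpos (by linarith)]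
                    ring
                _ = t - s := by ring
            have hge : t - s ≤ dist (γ s) (σ (t - ε)) := by
              have h1 : dist z₀ (γ s) = s := by
                rw [← hγ0, hγmin 0 ⟨le_rfl, hd0⟩ s ⟨hs0, hsd⟩, abs_of_nonpos (by linarith)]
                ring
              have h2 : dist (σ (t - ε)) q = (d - ε) - (t - ε) := by
                rw [← hσD, hσmin (t - ε) ⟨by linarith, by linarith⟩ (d - ε)
                  ⟨by linarith, le_rfl⟩, abs_of_nonpos (by linarith)]
                ring
              have h3 : d ≤ dist z₀ (γ s) + dist (γ s) (σ (t - ε)) + dist (σ (t - ε)) q := by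
                rw [← hqz₀, dist_comm q z₀]
                calc dist z₀ q ≤ dist z₀ (σ (t - ε)) + dist (σ (t - ε)) q := dist_triangle _ _ _
                  _ ≤ dist z₀ (γ s) + dist (γ s) (σ (t - ε)) + dist (σ (t - ε)) q := by
                      have := dist_triangle z₀ (γ s) (σ (t - ε))
                      linarith
              rw [h1, h2] at h3
              linarith
            linarith
      intro s hs t ht
      rcases le_total s t with h | h
      · rw [key s hs t ht h, abs_of_nonpos (by linarith)]; ring
      · rw [dist_comm, key t ht s hs h, abs_of_nonneg (by linarith)]
    -- τ is a geodesic
    have hτgeo : IsGeodesic τ := by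
      intro t₀
      rcases lt_trichotomy t₀ ε with h | h | h
      · obtain ⟨ε₁, hε₁, hmin⟩ := hγ t₀
        refine ⟨min ε₁ (ε - t₀), lt_min hε₁ (by linarith), ?_⟩
        intro s hs t ht
        have hsub : Set.Icc (t₀ - min ε₁ (ε - t₀)) (t₀ + min ε₁ (ε - t₀)) ⊆
            Set.Icc (t₀ - ε₁) (t₀ + ε₁) :=
          Set.Icc_subset_Icc (by linarith [min_le_left ε₁ (ε - t₀)])
            (by linarith [min_le_left ε₁ (ε - t₀)])
        have hle : ∀ u ∈ Set.Icc (t₀ - min ε₁ (ε - t₀)) (t₀ + min ε₁ (ε - t₀)), u ≤ ε := by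
          intro u hu
          have := hu.2
          have := min_le_right ε₁ (ε - t₀)
          linarith
        rw [hτγ s (hle s hs), hτγ t (hle t ht)]
        exact hmin s (hsub hs) t (hsub ht)
      · subst h
        refine ⟨min ε (d - ε), lt_min hεpos (by linarith), ?_⟩
        exact hτmin.mono (Set.Icc_subset_Icc
          (by linarith [min_le_left ε (d - ε)])
          (by linarith [min_le_right ε (d - ε)]))
      · obtain ⟨ε₁, hε₁, hmin⟩ := hσ (t₀ - ε)
        refine ⟨min ε₁ (t₀ - ε), lt_min hε₁ (by linarith), ?_⟩
        intro s hs t ht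
        have hge : ∀ u ∈ Set.Icc (t₀ - min ε₁ (t₀ - ε)) (t₀ + min ε₁ (t₀ - ε)), ε ≤ u := by
          intro u hu
          have := hu.1
          have := min_le_right ε₁ (t₀ - ε)
          linarith
        rw [hτσ s (hge s hs), hτσ t (hge t ht)]
        have h1 := min_le_left ε₁ (t₀ - ε)
        have := hmin (s - ε) ⟨by linarith [hs.1], by linarith [hs.2]⟩
          (t - ε) ⟨by linarith [ht.1], by linarith [ht.2]⟩
        rw [this]
        congr 1
        ring
    -- rigidity: γ = τ
    have hγτ : γ = τ := by
      apply hrig γ τ hγ hτgeo 0 ε hεpos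
      intro t ht
      exact (hτγ t ht.2).symm
    have : p = τ d := by rw [← hγd, hγτ]
    rw [hτσ d hεd.le] at this
    rw [this, hσD]

/-- Let `(N,g)` be a complete connected Riemannian manifold (proper
connected metric space with minimizing geodesics joining any two points and geodesic
rigidity), `U ⊆ N` nonempty open and bounded.  The travel time map
`R : N → C(cl U, ℝ)` (with the sup metric on `C(cl U, ℝ)`) is a proper map — sequences
escaping every compact set of `N` have images escaping every compact set of `C(cl U, ℝ)` —
and consequently `R` is a topological embedding of `N` onto its image. -/
theorem travelTimeMap_properMap_and_embedding
    {N : Type*} [MetricSpace N] [ProperSpace N] [ConnectedSpace N]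
    (hconn : ∀ x y : N, ∃ γ : ℝ → N, IsGeodesic γ ∧ γ 0 = x ∧ γ (dist x y) = y ∧
      IsMinGeodOn γ 0 (dist x y))
    (hrig : ∀ γ₁ γ₂ : ℝ → N, IsGeodesic γ₁ → IsGeodesic γ₂ →
      ∀ a b : ℝ, a < b → (∀ t ∈ Set.Icc a b, γ₁ t = γ₂ t) → γ₁ = γ₂)
    (U : Set N) (hU : IsOpen U) (hne : U.Nonempty) (hb : Bornology.IsBounded U)
    [CompactSpace (closure U)] :
    IsProperMap (travelTimeMap (closure U) : N → C(closure U, ℝ)) ∧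
      Topology.IsEmbedding (travelTimeMap (closure U) : N → C(closure U, ℝ)) := by
  obtain ⟨z₀, hz₀⟩ := hne
  have hz₀c : z₀ ∈ closure U := subset_closure hz₀
  -- R is 1-Lipschitz, hence continuous
  have hlip : LipschitzWith 1 (travelTimeMap (closure U) : N → C(closure U, ℝ)) := by
    apply LipschitzWith.of_dist_le_mul
    intro p q
    simp only [NNReal.coe_one, one_mul]
    rw [ContinuousMap.dist_le dist_nonneg]
    intro z
    simp only [travelTimeMap, ContinuousMap.coe_mk, Real.dist_eq]
    exact abs_dist_sub_le p q (z : N)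
  have hcont : Continuous (travelTimeMap (closure U) : N → C(closure U, ℝ)) :=
    hlip.continuous
  -- R is proper
  have hproper : IsProperMap (travelTimeMap (closure U) : N → C(closure U, ℝ)) := by
    haveI : UCompactlyGeneratedSpace C(↑(closure U), ℝ) := by
      set_option synthInstance.maxHeartbeats 1000000 in infer_instance
    rw [isProperMap_iff_isCompact_preimage]
    refine ⟨hcont, fun S hS => ?_⟩
    obtain ⟨C, hC⟩ := hS.isBounded.subset_closedBall (travelTimeMap (closure U) z₀)
    have hsub : (travelTimeMap (closure U) : N → C(closure U, ℝ)) ⁻¹' S ⊆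
        Metric.closedBall z₀ C := by
      intro p hp
      have h1 : dist (travelTimeMap (closure U) p) (travelTimeMap (closure U) z₀) ≤ C :=
        hC hp
      have h2 := ContinuousMap.dist_apply_le_dist (f := travelTimeMap (closure U) p)
        (g := travelTimeMap (closure U) z₀) (⟨z₀, hz₀c⟩ : closure U)
      simp only [travelTimeMap, ContinuousMap.coe_mk, Real.dist_eq, dist_self,
        sub_zero] at h2
      rw [Metric.mem_closedBall]
      calc dist p z₀ = |dist p z₀| := (abs_of_nonneg dist_nonneg).symm
        _ ≤ dist (travelTimeMap (closure U) p) (travelTimeMap (closure U) z₀) := h2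
        _ ≤ C := h1
    exact (isCompact_closedBall z₀ C).of_isClosed_subset
      (hS.isClosed.preimage hcont) hsub
  exact ⟨hproper, (Topology.IsClosedEmbedding.of_continuous_injective_isClosedMap hcont
    (travelTimeMap_injective hconn hrig U hU ⟨z₀, hz₀⟩) hproper.isClosedMap).toIsEmbedding⟩
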